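/- arXiv:2302.01121 — 3 statements merged into one kernel-verified Lean document; each statement's English description precedes it below -/
import Mathlib

section
/- The map Φ₂ : L¹-into-itself given by Φ₂(f) = |f| (pointwise absolute value) on bounded measurable functions on a compact set 𝒳 is directionally Hadamard differentiable at every h with respect to the L¹-norm, with derivative (Φ₂)'_h(f)(x) = sgn(h(x))·f(x) for x with h(x) ≠ 0 and (Φ₂)'_h(f)(x) = |f(x)| for x with h(x) = 0. That is, for any sequences tₙ → 0⁺ of positive reals and xₙ → x in L¹-norm (with xₙ, x bounded), ‖(|h + tₙxₙ| − |h|)/tₙ − (Φ₂)'_h(x)‖₁ → 0. -/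
/-!
For `b, a : ℝ` the quotient `(|b + t a| - |b|) / t` is `1`-Lipschitz in `a` and tends, as
`t → 0⁺`, to `|a|` if `b = 0` and to `sign b · a` otherwise (it is eventually equal to its
limit). Dominated convergence, with dominating function `2|x|`, gives `L¹` convergence in the
fixed direction `x`; the Lipschitz bound then costs at most `‖xₙ - x‖₁` when the direction is
perturbed to `xₙ`, which is the Hadamard part.
-/

open MeasureTheory Filter Topology

theorem Real.monotone_sign : Monotone Real.sign := by
  intro a b hab
  unfold Real.sign
  split_ifs <;> linarith

theorem Real.measurable_sign : Measurable Real.sign :=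
  Real.monotone_sign.measurable

noncomputable def absDiffQuot (b a t : ℝ) : ℝ := (|b + t * a| - |b|) / t

noncomputable def absDirDeriv (b a : ℝ) : ℝ := if b = 0 then |a| else Real.sign b * a

section absDiffQuot

variable {a a' b t : ℝ}

theorem absDiffQuot_zero_left (ht : 0 < t) : absDiffQuot 0 a t = |a| := by
  rw [absDiffQuot, zero_add, abs_zero, sub_zero, abs_mul, abs_of_pos ht,
    mul_div_cancel_left₀ _ ht.ne']

theorem absDiffQuot_of_abs_mul_lt (ht : t ≠ 0) (hb : b ≠ 0) (hta : |t * a| < |b|) :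
    absDiffQuot b a t = Real.sign b * a := by
  obtain ⟨hlo, hhi⟩ := abs_lt.1 hta
  rcases hb.lt_or_gt with hneg | hpos
  · rw [abs_of_neg hneg] at hlo hhi
    rw [absDiffQuot, abs_of_neg (by linarith), abs_of_neg hneg, Real.sign_of_neg hneg]
    field_simp
    ring
  · rw [abs_of_pos hpos] at hlo hhi
    rw [absDiffQuot, abs_of_pos (by linarith), abs_of_pos hpos, Real.sign_of_pos hpos]
    field_simp
    ring

theorem abs_absDiffQuot_sub_le (ht : 0 < t) :
    |absDiffQuot b a t - absDiffQuot b a' t| ≤ |a - a'| := by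
  rw [absDiffQuot, absDiffQuot, div_sub_div_same, sub_sub_sub_cancel_right, abs_div,
    abs_of_pos ht, div_le_iff₀ ht]
  calc |(|b + t * a| - |b + t * a'|)| ≤ |b + t * a - (b + t * a')| :=
        abs_abs_sub_abs_le_abs_sub _ _
    _ = |a - a'| * t := by
        rw [add_sub_add_left_eq_sub, ← mul_sub, abs_mul, abs_of_pos ht, mul_comm]

theorem abs_absDiffQuot_le (ht : 0 < t) : |absDiffQuot b a t| ≤ |a| := by
  simpa [absDiffQuot] using abs_absDiffQuot_sub_le (b := b) (a' := 0) ht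

theorem abs_absDirDeriv_le : |absDirDeriv b a| ≤ |a| := by
  unfold absDirDeriv
  split_ifs with hb
  · rw [abs_abs]
  · rcases Real.sign_apply_eq_of_ne_zero b hb with hs | hs <;> simp [hs]

theorem tendsto_absDiffQuot : Tendsto (absDiffQuot b a) (𝓝[>] 0) (𝓝 (absDirDeriv b a)) := by
  by_cases hb : b = 0
  · subst hb
    refine tendsto_const_nhds.congr' ?_
    filter_upwards [self_mem_nhdsWithin] with t ht
    rw [absDirDeriv, if_pos rfl, absDiffQuot_zero_left ht]
  · have hsmall : ∀ᶠ t in 𝓝 (0 : ℝ), |t * a| < |b| := by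
      refine (Continuous.tendsto (by fun_prop) 0).eventually (gt_mem_nhds ?_)
      simpa using hb
    refine tendsto_const_nhds.congr' ?_
    filter_upwards [self_mem_nhdsWithin, nhdsWithin_le_nhds hsmall] with t ht hta
    rw [absDirDeriv, if_neg hb, absDiffQuot_of_abs_mul_lt ht.ne' hb hta]

theorem measurable_absDirDeriv : Measurable (Function.uncurry absDirDeriv) :=
  Measurable.ite (measurableSet_eq_fun measurable_fst measurable_const)
    measurable_snd.abs ((Real.measurable_sign.comp measurable_fst).mul measurable_snd)

theorem abs_absDiffQuot_sub_absDirDeriv_le (ht : 0 < t) :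
    |absDiffQuot b a t - absDirDeriv b a| ≤ 2 * |a| := by
  have hq : |absDiffQuot b a t| ≤ |a| := abs_absDiffQuot_le ht
  have hD : |absDirDeriv b a| ≤ |a| := abs_absDirDeriv_le
  linarith [abs_sub (absDiffQuot b a t) (absDirDeriv b a)]

end absDiffQuot

section Integral

variable {α ι : Type*} [MeasurableSpace α] {μ : Measure α} {l : Filter ι}
  {h x : α → ℝ} {xs : ι → α → ℝ} {t : ι → ℝ}

theorem integrable_abs_absDiffQuot_sub_absDirDeriv (hh : AEMeasurable h μ) (hx : Integrable x μ)
    {s : ℝ} (hs : 0 < s) :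
    Integrable (fun y => |absDiffQuot (h y) (x y) s - absDirDeriv (h y) (x y)|) μ := by
  have hq : AEMeasurable (fun y => absDiffQuot (h y) (x y) s) μ := by
    have := hx.aemeasurable
    unfold absDiffQuot
    fun_prop
  have hD : AEMeasurable (fun y => absDirDeriv (h y) (x y)) μ :=
    measurable_absDirDeriv.comp_aemeasurable (hh.prodMk hx.aemeasurable)
  refine (hx.abs.const_mul 2).mono' (hq.sub hD).abs.aestronglyMeasurable
    (.of_forall fun y => ?_)
  rw [Real.norm_eq_abs, abs_abs]
  exact abs_absDiffQuot_sub_absDirDeriv_le hs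

theorem tendsto_integral_abs_absDiffQuot_sub_absDirDeriv [l.IsCountablyGenerated]
    (hh : AEMeasurable h μ) (hx : Integrable x μ) (ht : Tendsto t l (𝓝[>] 0)) :
    Tendsto (fun n => ∫ y, |absDiffQuot (h y) (x y) (t n) - absDirDeriv (h y) (x y)| ∂μ)
      l (𝓝 0) := by
  have hpos : ∀ᶠ n in l, 0 < t n := ht.eventually self_mem_nhdsWithin
  have hlim : ∀ y, Tendsto (fun n => |absDiffQuot (h y) (x y) (t n) - absDirDeriv (h y) (x y)|)
      l (𝓝 0) := fun y => by
    have hq := (tendsto_absDiffQuot (b := h y) (a := x y)).comp ht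
    simpa using (hq.sub_const (absDirDeriv (h y) (x y))).abs
  simpa using tendsto_integral_filter_of_dominated_convergence (fun y => 2 * |x y|)
    (hpos.mono fun n hn => (integrable_abs_absDiffQuot_sub_absDirDeriv hh hx hn).1)
    (hpos.mono fun n hn => .of_forall fun y => by
      rw [Real.norm_eq_abs, abs_abs]
      exact abs_absDiffQuot_sub_absDirDeriv_le hn)
    (hx.abs.const_mul 2) (.of_forall hlim)

theorem tendsto_integral_abs_absDiffQuot_sub_absDirDeriv_of_tendsto [l.IsCountablyGenerated]
    (hh : AEMeasurable h μ) (hx : Integrable x μ) (hxs : ∀ n, Integrable (xs n) μ)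
    (ht : Tendsto t l (𝓝[>] 0))
    (hL1 : Tendsto (fun n => ∫ y, |xs n y - x y| ∂μ) l (𝓝 0)) :
    Tendsto (fun n => ∫ y, |absDiffQuot (h y) (xs n y) (t n) - absDirDeriv (h y) (x y)| ∂μ)
      l (𝓝 0) := by
  have hpos : ∀ᶠ n in l, 0 < t n := ht.eventually self_mem_nhdsWithin
  refine squeeze_zero' (.of_forall fun n => integral_nonneg fun y => abs_nonneg _) ?_
    (by simpa using hL1.add (tendsto_integral_abs_absDiffQuot_sub_absDirDeriv hh hx ht))
  filter_upwards [hpos] with n hn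
  have hG := integrable_abs_absDiffQuot_sub_absDirDeriv hh hx hn
  have hdist : Integrable (fun y => |xs n y - x y|) μ := ((hxs n).sub hx).abs
  rw [← integral_add hdist hG]
  refine integral_mono_of_nonneg (.of_forall fun y => abs_nonneg _) (hdist.add hG)
    (.of_forall fun y => ?_)
  calc |absDiffQuot (h y) (xs n y) (t n) - absDirDeriv (h y) (x y)|
      ≤ |absDiffQuot (h y) (xs n y) (t n) - absDiffQuot (h y) (x y) (t n)|
        + |absDiffQuot (h y) (x y) (t n) - absDirDeriv (h y) (x y)| := abs_sub_le _ _ _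
    _ ≤ |xs n y - x y| + |absDiffQuot (h y) (x y) (t n) - absDirDeriv (h y) (x y)| :=
        add_le_add_left (abs_absDiffQuot_sub_le hn) _

end Integral

theorem abs_map_directionally_hadamard_differentiable_general
    {d : ℕ} (X : Set (Fin d → ℝ)) (hX : IsCompact X)
    (h : (Fin d → ℝ) → ℝ) (hhm : Measurable h)
    (t : ℕ → ℝ) (ht : ∀ n, 0 < t n) (ht0 : Tendsto t atTop (nhds 0))
    (xs : ℕ → (Fin d → ℝ) → ℝ) (x : (Fin d → ℝ) → ℝ)
    (hxm : ∀ n, Measurable (xs n)) (hx : Measurable x)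
    (Mn : ℕ → ℝ) (hxb : ∀ n, ∀ y ∈ X, |xs n y| ≤ Mn n)
    (Mx : ℝ) (hxb' : ∀ y ∈ X, |x y| ≤ Mx)
    (hL1 : Tendsto (fun n => ∫ y in X, |xs n y - x y|) atTop (nhds 0)) :
    Tendsto
      (fun n => ∫ y in X,
        |(|h y + t n * xs n y| - |h y|) / t n -
          (if h y = 0 then |x y| else Real.sign (h y) * x y)|)
      atTop (nhds 0) := by
  have integrableOn_of_bounded {f : (Fin d → ℝ) → ℝ} {C : ℝ} (hf : Measurable f)
      (hC : ∀ y ∈ X, |f y| ≤ C) : IntegrableOn f X :=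
    Measure.integrableOn_of_bounded hX.measure_lt_top.ne hf.aestronglyMeasurable
      ((ae_restrict_mem hX.measurableSet).mono hC)
  exact tendsto_integral_abs_absDiffQuot_sub_absDirDeriv_of_tendsto hhm.aemeasurable
    (integrableOn_of_bounded hx hxb') (fun n => integrableOn_of_bounded (hxm n) (hxb n))
    (tendsto_nhdsWithin_iff.2 ⟨ht0, .of_forall ht⟩) hL1

/-- Directional Hadamard differentiability of the pointwise absolute value map
`Φ₂(f) = |f|` on bounded measurable functions on a compact set `X`, with respect
to the `L¹`-norm: for `tₙ → 0⁺` and `xₙ → x` in `L¹`, the difference quotients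
converge in `L¹` to `(Φ₂)'_h(x) = sgn(h)·x` on `{h ≠ 0}` and `|x|` on `{h = 0}`. -/
theorem abs_map_directionally_hadamard_differentiable
    {d : ℕ} (X : Set (Fin d → ℝ)) (hX : IsCompact X)
    (h : (Fin d → ℝ) → ℝ) (hhm : Measurable h) (Mh : ℝ) (hhb : ∀ y ∈ X, |h y| ≤ Mh)
    (t : ℕ → ℝ) (ht : ∀ n, 0 < t n) (ht0 : Tendsto t atTop (nhds 0))
    (xs : ℕ → (Fin d → ℝ) → ℝ) (x : (Fin d → ℝ) → ℝ)
    (hxm : ∀ n, Measurable (xs n)) (hx : Measurable x)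
    (Mn : ℕ → ℝ) (hxb : ∀ n, ∀ y ∈ X, |xs n y| ≤ Mn n)
    (Mx : ℝ) (hxb' : ∀ y ∈ X, |x y| ≤ Mx)
    (hL1 : Tendsto (fun n => ∫ y in X, |xs n y - x y|) atTop (nhds 0)) :
    Tendsto
      (fun n => ∫ y in X,
        |(|h y + t n * xs n y| - |h y|) / t n -
          (if h y = 0 then |x y| else Real.sign (h y) * x y)|)
      atTop (nhds 0) :=
  abs_map_directionally_hadamard_differentiable_general X hX h hhm t ht ht0 xs x hxm hx Mn hxb Mx
    hxb' hL1
end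

section
/- The functional Φ(f) = ∫_𝒳 |f(x)| dx on bounded measurable functions on a compact set 𝒳 is directionally Hadamard differentiable at every h ∈ ℓ^∞(𝒳) with respect to the L¹-norm, with directional derivative Φ'_h(f) = ∫_{{h ≠ 0}} sgn(h(x)) f(x) dx + ∫_{{h = 0}} |f(x)| dx. That is, for any tₙ → 0⁺ and any bounded xₙ converging to bounded x in L¹-norm, (Φ(h + tₙxₙ) − Φ(h))/tₙ → Φ'_h(x). -/
open MeasureTheory Filter Set

/-- Directional Hadamard differentiability of `Φ(f) = ∫_X |f|` with respect to the
`L¹`-norm: for `tₙ → 0⁺` and bounded `xₙ → x` in `L¹`, the difference quotients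
`(Φ(h + tₙxₙ) − Φ(h))/tₙ` converge to
`Φ'_h(x) = ∫_{h≠0} sgn(h)·x + ∫_{h=0} |x|`. -/
theorem L1_functional_directionally_hadamard_differentiable
    {d : ℕ} (X : Set (Fin d → ℝ)) (hX : IsCompact X)
    (h : (Fin d → ℝ) → ℝ) (hhm : Measurable h) (Mh : ℝ) (hhb : ∀ y ∈ X, |h y| ≤ Mh)
    (t : ℕ → ℝ) (ht : ∀ n, 0 < t n) (ht0 : Tendsto t atTop (nhds 0))
    (xs : ℕ → (Fin d → ℝ) → ℝ) (x : (Fin d → ℝ) → ℝ)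
    (hxm : ∀ n, Measurable (xs n)) (hx : Measurable x)
    (Mn : ℕ → ℝ) (hxb : ∀ n, ∀ y ∈ X, |xs n y| ≤ Mn n)
    (Mx : ℝ) (hxb' : ∀ y ∈ X, |x y| ≤ Mx)
    (hL1 : Tendsto (fun n => ∫ y in X, |xs n y - x y|) atTop (nhds 0)) :
    Tendsto
      (fun n =>
        ((∫ y in X, |h y + t n * xs n y|) - ∫ y in X, |h y|) / t n)
      atTop
      (nhds ((∫ y in X ∩ {y | h y ≠ 0}, Real.sign (h y) * x y) +
             ∫ y in X ∩ {y | h y = 0}, |x y|)) := by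
  have hXm : MeasurableSet X := hX.isClosed.measurableSet
  have hfin : IsFiniteMeasure (volume.restrict X) :=
    ⟨by rw [Measure.restrict_apply_univ]; exact hX.measure_lt_top⟩
  -- integrability helper
  have integ : ∀ (f : (Fin d → ℝ) → ℝ) (M : ℝ), Measurable f →
      (∀ y ∈ X, |f y| ≤ M) → IntegrableOn f X := by
    intro f M hf hb
    refine Integrable.mono' (integrable_const M) hf.aestronglyMeasurable ?_
    filter_upwards [ae_restrict_mem hXm] with y hy
    simpa [Real.norm_eq_abs] using hb y hy
  -- measurability of sign ∘ h
  have hsgn : Measurable fun y => Real.sign (h y) := by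
    have : (fun y => Real.sign (h y)) =
        fun y => if h y < 0 then (-1 : ℝ) else if 0 < h y then 1 else 0 := by
      funext y; rfl
    rw [this]
    exact Measurable.ite (hhm measurableSet_Iio) measurable_const
      (Measurable.ite (measurableSet_lt measurable_const hhm) measurable_const measurable_const)
  have hsgnb : ∀ y, |Real.sign (h y)| ≤ 1 := by
    intro y
    rcases Real.sign_apply_eq (h y) with e | e | e <;> rw [e] <;> norm_num
  -- the limit function
  set g : (Fin d → ℝ) → ℝ :=
    fun y => if h y = 0 then |x y| else Real.sign (h y) * x y with hg
  have hgm : Measurable g :=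
    Measurable.ite (hhm (measurableSet_singleton 0)) hx.abs (hsgn.mul hx)
  have hgb : ∀ y ∈ X, |g y| ≤ Mx := by
    intro y hy
    have hxy := hxb' y hy
    by_cases h0 : h y = 0
    · simp only [hg, if_pos h0]; simpa using hxy
    · simp only [hg, if_neg h0]
      calc |Real.sign (h y) * x y| = |Real.sign (h y)| * |x y| := abs_mul _ _
        _ ≤ 1 * |x y| := by
            exact mul_le_mul_of_nonneg_right (hsgnb y) (abs_nonneg _)
        _ ≤ Mx := by simpa using hxy
  have hgint : IntegrableOn g X := integ g Mx hgm hgb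
  -- basic integrables
  have Ih : IntegrableOn (fun y => |h y|) X :=
    integ _ Mh hhm.abs (fun y hy => by simpa [abs_abs] using hhb y hy)
  have IF : ∀ n, IntegrableOn (fun y => |h y + t n * xs n y|) X := by
    intro n
    refine integ _ (Mh + t n * Mn n) (hhm.add ((measurable_const.mul (hxm n)))).abs ?_
    intro y hy
    rw [abs_abs]
    calc |h y + t n * xs n y| ≤ |h y| + |t n * xs n y| := abs_add_le _ _
      _ ≤ Mh + t n * Mn n := by
          refine add_le_add (hhb y hy) ?_
          rw [abs_mul, abs_of_pos (ht n)]
          exact mul_le_mul_of_nonneg_left (hxb n y hy) (ht n).le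
  have IG : ∀ n, IntegrableOn (fun y => |h y + t n * x y|) X := by
    intro n
    refine integ _ (Mh + t n * Mx) (hhm.add ((measurable_const.mul hx))).abs ?_
    intro y hy
    rw [abs_abs]
    calc |h y + t n * x y| ≤ |h y| + |t n * x y| := abs_add_le _ _
      _ ≤ Mh + t n * Mx := by
          refine add_le_add (hhb y hy) ?_
          rw [abs_mul, abs_of_pos (ht n)]
          exact mul_le_mul_of_nonneg_left (hxb' y hy) (ht n).le
  -- the target equals ∫_X g
  have htarget : (∫ y in X ∩ {y | h y ≠ 0}, Real.sign (h y) * x y) +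
      (∫ y in X ∩ {y | h y = 0}, |x y|) = ∫ y in X, g y := by
    have hs1 : MeasurableSet (X ∩ {y | h y ≠ 0}) :=
      hXm.inter ((hhm (measurableSet_singleton 0)).compl)
    have hs2 : MeasurableSet (X ∩ {y | h y = 0}) :=
      hXm.inter (hhm (measurableSet_singleton 0))
    have hdisj : Disjoint (X ∩ {y | h y ≠ 0}) (X ∩ {y | h y = 0}) := by
      refine Set.disjoint_left.2 ?_
      rintro y ⟨-, hy1⟩ ⟨-, hy2⟩
      exact hy1 hy2
    have hunion : (X ∩ {y | h y ≠ 0}) ∪ (X ∩ {y | h y = 0}) = X := by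
      rw [← Set.inter_union_distrib_left]
      have hu : ({y | h y ≠ 0} ∪ {y | h y = 0}) = Set.univ := by
        ext y; by_cases h0 : h y = 0 <;> simp [h0]
      rw [hu, Set.inter_univ]
    have e1 : (∫ y in X ∩ {y | h y ≠ 0}, Real.sign (h y) * x y) =
        ∫ y in X ∩ {y | h y ≠ 0}, g y := by
      refine setIntegral_congr_fun hs1 ?_
      intro y hy
      simp only [hg, if_neg hy.2]
    have e2 : (∫ y in X ∩ {y | h y = 0}, |x y|) = ∫ y in X ∩ {y | h y = 0}, g y := by
      refine setIntegral_congr_fun hs2 ?_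
      intro y hy
      simp only [hg]
      exact (if_pos hy.2).symm
    rw [e1, e2, ← setIntegral_union hdisj hs2
      (hgint.mono_set Set.inter_subset_left)
      (hgint.mono_set Set.inter_subset_left), hunion]
  rw [htarget]
  -- rewrite the difference quotient as one integral
  have hrw : ∀ n, ((∫ y in X, |h y + t n * xs n y|) - ∫ y in X, |h y|) / t n =
      ∫ y in X, (|h y + t n * xs n y| - |h y|) / t n := by
    intro n
    rw [integral_div, integral_sub (IF n) Ih]
  simp only [hrw]
  -- split into two parts
  have key : ∀ n, (∫ y in X, (|h y + t n * xs n y| - |h y|) / t n) =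
      (∫ y in X, (|h y + t n * xs n y| - |h y + t n * x y|) / t n) +
      ∫ y in X, (|h y + t n * x y| - |h y|) / t n := by
    intro n
    rw [← integral_add]
    · congr 1; funext y; ring
    · exact (((IF n).sub (IG n)).div_const _)
    · exact (((IG n).sub Ih).div_const _)
  simp only [key]
  have limA : Tendsto (fun n => ∫ y in X,
      (|h y + t n * xs n y| - |h y + t n * x y|) / t n) atTop (nhds 0) := by
    have hdiffint : ∀ n, IntegrableOn (fun y => |xs n y - x y|) X := by
      intro n
      refine integ _ (Mn n + Mx) ((hxm n).sub hx).abs ?_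
      intro y hy
      rw [abs_abs]
      exact (abs_sub (xs n y) (x y)).trans (add_le_add (hxb n y hy) (hxb' y hy))
    refine squeeze_zero_norm (fun n => ?_) hL1
    rw [Real.norm_eq_abs]
    have step1 : |∫ y in X, (|h y + t n * xs n y| - |h y + t n * x y|) / t n|
        ≤ ∫ y in X, |(|h y + t n * xs n y| - |h y + t n * x y|)| / |t n| := by
      simpa [Real.norm_eq_abs, abs_div] using
        norm_integral_le_integral_norm
          (fun y => (|h y + t n * xs n y| - |h y + t n * x y|) / t n)
          (μ := volume.restrict X)
    refine step1.trans ?_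
    have hint2 : IntegrableOn
        (fun y => |(|h y + t n * xs n y| - |h y + t n * x y|)| / |t n|) X :=
      (((IF n).sub (IG n)).abs).div_const _
    refine integral_mono_ae hint2 (hdiffint n) ?_
    filter_upwards with y
    rw [abs_of_pos (ht n), div_le_iff₀ (ht n)]
    refine (abs_abs_sub_abs_le_abs_sub _ _).trans ?_
    rw [show (h y + t n * xs n y) - (h y + t n * x y)
        = t n * (xs n y - x y) by ring, abs_mul, abs_of_pos (ht n), mul_comm]
  have limB : Tendsto (fun n => ∫ y in X,
      (|h y + t n * x y| - |h y|) / t n) atTop (nhds (∫ y in X, g y)) := by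
    refine tendsto_integral_of_dominated_convergence (fun _ => Mx)
      (fun n => (((hhm.add (measurable_const.mul hx)).abs.sub hhm.abs).div_const
        _).aestronglyMeasurable) (integrable_const Mx) (fun n => ?_) ?_
    · filter_upwards [ae_restrict_mem hXm] with y hy
      rw [Real.norm_eq_abs, abs_div, abs_of_pos (ht n), div_le_iff₀ (ht n)]
      have s1 : |(|h y + t n * x y| - |h y|)| ≤ |t n * x y| := by
        simpa using abs_abs_sub_abs_le_abs_sub (h y + t n * x y) (h y)
      refine s1.trans ?_
      rw [abs_mul, abs_of_pos (ht n), mul_comm]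
      exact mul_le_mul_of_nonneg_right (hxb' y hy) (ht n).le
    · filter_upwards with y
      by_cases h0 : h y = 0
      · have heq : ∀ n, (|h y + t n * x y| - |h y|) / t n = |x y| := by
          intro n
          rw [h0, zero_add, abs_zero, sub_zero, abs_mul, abs_of_pos (ht n),
            mul_comm, mul_div_assoc, div_self (ht n).ne', mul_one]
        have hgx : g y = |x y| := by simp [hg, h0]
        rw [hgx]
        exact tendsto_const_nhds.congr (fun n => (heq n).symm)
      · have hpos : (0 : ℝ) < |h y| := abs_pos.2 h0
        have hev : ∀ᶠ n in atTop, t n * |x y| < |h y| := by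
          have : Tendsto (fun n => t n * |x y|) atTop (nhds 0) := by
            simpa using ht0.mul_const |x y|
          exact this.eventually_lt_const hpos
        refine Tendsto.congr' ?_ (tendsto_const_nhds (x := g y))
        filter_upwards [hev] with n hn
        have habs : |h y + t n * x y| = |h y| + t n * Real.sign (h y) * x y := by
          rcases lt_or_gt_of_ne h0 with hneg | hpos'
          · have h1 : h y + t n * x y < 0 := by
              have : t n * x y ≤ t n * |x y| :=
                mul_le_mul_of_nonneg_left (le_abs_self _) (ht n).le
              have h2 : t n * |x y| < -(h y) := by
                rwa [abs_of_neg hneg] at hn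
              linarith
            rw [abs_of_neg h1, abs_of_neg hneg, Real.sign_of_neg hneg]
            ring
          · have h1 : 0 < h y + t n * x y := by
              have : -(t n * |x y|) ≤ t n * x y := by
                have := mul_le_mul_of_nonneg_left (neg_abs_le (x y)) (ht n).le
                simpa [mul_neg] using this
              have h2 : t n * |x y| < h y := by rwa [abs_of_pos hpos'] at hn
              linarith
            rw [abs_of_pos h1, abs_of_pos hpos', Real.sign_of_pos hpos']
            ring
        rw [habs]
        simp only [hg, if_neg h0]
        rw [add_sub_cancel_left, mul_assoc, mul_comm (t n), mul_div_assoc,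
          div_self (ht n).ne', mul_one]
  have := limA.add limB
  simpa using this
end

section
/- For h ∈ ℓ^∞(𝒳), the directional derivative Φ'_h(f) = ∫_{{h≠0}} sgn(h(x)) f(x) dx + ∫_{{h=0}} |f(x)| dx is a linear map in f if and only if the set {x ∈ 𝒳 : h(x) = 0} has Lebesgue measure zero. -/
/-!
Off `{h = 0}` the derivative is integration against `sign h`, which is linear in `f`; on
`{h = 0}` it is `∫ |f|`, which is linear only if that set is null. Testing additivity on the
constants `1` and `-1` gives `0 = dPhi h 0 = dPhi h 1 + dPhi h (-1) = 2 λ({h = 0})`.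
-/

open MeasureTheory Filter Set

/-- The directional derivative of `f ↦ ∫_X |f|` at `h`. -/
noncomputable def dPhi {d : ℕ} (X : Set (Fin d → ℝ)) (h f : (Fin d → ℝ) → ℝ) : ℝ :=
  (∫ y in X ∩ {y | h y ≠ 0}, Real.sign (h y) * f y) + ∫ y in X ∩ {y | h y = 0}, |f y|

namespace Real

lemma measurable_sign_s2 : Measurable Real.sign :=
  Measurable.ite (measurableSet_lt measurable_id measurable_const) measurable_const
    (Measurable.ite (measurableSet_lt measurable_const measurable_id) measurable_const
      measurable_const)

lemma abs_sign_le_one (a : ℝ) : |Real.sign a| ≤ 1 := by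
  rcases Real.sign_apply_eq a with h | h | h <;> simp [h]

end Real

section Integrability

variable {α : Type*} [MeasurableSpace α] {μ : Measure α} {s : Set α} {f h : α → ℝ} {M : ℝ}

lemma integrableOn_of_abs_le (hs : MeasurableSet s) (hμs : μ s ≠ ⊤) (hf : Measurable f)
    (hfM : ∀ y ∈ s, |f y| ≤ M) : IntegrableOn f s μ :=
  Measure.integrableOn_of_bounded hμs hf.aestronglyMeasurable (ae_restrict_of_forall_mem hs hfM)

lemma integrableOn_sign_mul_of_abs_le (hs : MeasurableSet s) (hμs : μ s ≠ ⊤)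
    (hh : Measurable h) (hf : Measurable f) (hfM : ∀ y ∈ s, |f y| ≤ M) :
    IntegrableOn (fun y => Real.sign (h y) * f y) s μ :=
  integrableOn_of_abs_le hs hμs ((Real.measurable_sign_s2.comp hh).mul hf) fun y hy =>
    calc |Real.sign (h y) * f y| = |Real.sign (h y)| * |f y| := abs_mul _ _
      _ ≤ 1 * M := mul_le_mul (Real.abs_sign_le_one _) (hfM y hy) (abs_nonneg _) zero_le_one
      _ = M := one_mul M

end Integrability

section dPhi

variable {d : ℕ} {X : Set (Fin d → ℝ)} {h : (Fin d → ℝ) → ℝ}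

lemma dPhi_zero : dPhi X h 0 = 0 := by
  simp [dPhi]

lemma dPhi_one_add_dPhi_neg_one :
    dPhi X h (fun _ => 1) + dPhi X h (fun _ => -1) = 2 * volume.real (X ∩ {y | h y = 0}) := by
  simp only [dPhi, mul_neg, mul_one, integral_neg, abs_neg, abs_one, setIntegral_const,
    smul_eq_mul]
  ring

lemma dPhi_eq_setIntegral_of_null (h0 : volume (X ∩ {y | h y = 0}) = 0)
    (f : (Fin d → ℝ) → ℝ) :
    dPhi X h f = ∫ y in X ∩ {y | h y ≠ 0}, Real.sign (h y) * f y := by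
  rw [dPhi, Measure.restrict_eq_zero.mpr h0, integral_zero_measure, add_zero]

lemma dPhi_add_of_null (hX : IsCompact X) (hh : Measurable h)
    (h0 : volume (X ∩ {y | h y = 0}) = 0) {f g : (Fin d → ℝ) → ℝ} {Mf Mg : ℝ}
    (hf : Measurable f) (hg : Measurable g) (hfM : ∀ y ∈ X, |f y| ≤ Mf)
    (hgM : ∀ y ∈ X, |g y| ≤ Mg) :
    dPhi X h (f + g) = dPhi X h f + dPhi X h g := by
  have hS : MeasurableSet (X ∩ {y | h y ≠ 0}) :=
    hX.measurableSet.inter (hh (measurableSet_singleton 0)).compl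
  have hμS : volume (X ∩ {y | h y ≠ 0}) ≠ ⊤ :=
    measure_ne_top_of_subset inter_subset_left hX.measure_lt_top.ne
  simp only [dPhi_eq_setIntegral_of_null h0, Pi.add_apply, mul_add]
  exact integral_add
    (integrableOn_sign_mul_of_abs_le hS hμS hh hf fun y hy => hfM y hy.1)
    (integrableOn_sign_mul_of_abs_le hS hμS hh hg fun y hy => hgM y hy.1)

lemma dPhi_smul_of_null (h0 : volume (X ∩ {y | h y = 0}) = 0) (f : (Fin d → ℝ) → ℝ) (c : ℝ) :
    dPhi X h (c • f) = c * dPhi X h f := by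
  simp only [dPhi_eq_setIntegral_of_null h0, Pi.smul_apply, smul_eq_mul, mul_left_comm _ c,
    integral_const_mul]

end dPhi

theorem dPhi_linear_iff_null_general
    {d : ℕ} (X : Set (Fin d → ℝ)) (hX : IsCompact X)
    (h : (Fin d → ℝ) → ℝ) (hhm : Measurable h) :
    ((∀ f g : (Fin d → ℝ) → ℝ, Measurable f → Measurable g →
        (∃ M, ∀ y ∈ X, |f y| ≤ M) → (∃ M, ∀ y ∈ X, |g y| ≤ M) →
        dPhi X h (f + g) = dPhi X h f + dPhi X h g) ∧
     (∀ f : (Fin d → ℝ) → ℝ, Measurable f → (∃ M, ∀ y ∈ X, |f y| ≤ M) →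
        ∀ c : ℝ, dPhi X h (c • f) = c * dPhi X h f))
    ↔ volume (X ∩ {y | h y = 0}) = 0 := by
  constructor
  · rintro ⟨hadd, -⟩
    have hsum := hadd (fun _ => 1) (fun _ => -1) measurable_const measurable_const
      ⟨1, fun _ _ => by simp⟩ ⟨1, fun _ _ => by simp⟩
    have hcancel : ((fun _ => 1) + fun _ => -1 : (Fin d → ℝ) → ℝ) = 0 := by
      funext; simp
    rw [hcancel, dPhi_zero, dPhi_one_add_dPhi_neg_one] at hsum
    exact (measureReal_eq_zero_iff
      (measure_ne_top_of_subset inter_subset_left hX.measure_lt_top.ne)).mp (by linarith)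
  · intro h0
    exact ⟨fun f g hf hg ⟨_, hfM⟩ ⟨_, hgM⟩ => dPhi_add_of_null hX hhm h0 hf hg hfM hgM,
      fun f _ _ c => dPhi_smul_of_null h0 f c⟩

/-- `Φ'_h` is linear on the bounded measurable functions if and only if the set
`{x ∈ X : h(x) = 0}` has Lebesgue measure zero. -/
theorem dPhi_linear_iff_null
    {d : ℕ} (X : Set (Fin d → ℝ)) (hX : IsCompact X) (hXm : MeasurableSet X)
    (h : (Fin d → ℝ) → ℝ) (hhm : Measurable h) (Mh : ℝ) (hhb : ∀ y ∈ X, |h y| ≤ Mh) :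
    ((∀ f g : (Fin d → ℝ) → ℝ, Measurable f → Measurable g →
        (∃ M, ∀ y ∈ X, |f y| ≤ M) → (∃ M, ∀ y ∈ X, |g y| ≤ M) →
        dPhi X h (f + g) = dPhi X h f + dPhi X h g) ∧
     (∀ f : (Fin d → ℝ) → ℝ, Measurable f → (∃ M, ∀ y ∈ X, |f y| ≤ M) →
        ∀ c : ℝ, dPhi X h (c • f) = c * dPhi X h f))
    ↔ volume (X ∩ {y | h y = 0}) = 0 :=
  dPhi_linear_iff_null_general X hX h hhm
end
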